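/- arXiv:1512.06170 — 3 statements merged into one kernel-verified Lean document; each statement's English description precedes it below -/
import Mathlib

section
/- For the tower of universal extensions F^{(n)} of a simple collection {F_i}, the natural restriction ring homomorphism End_G(F^{(n+1)}) → End_G(F^{(n)}) between the rings of filtration-preserving endomorphisms is surjective. -/
/-!
STATEMENT 7: For the tower of universal extensions `F⁽ⁿ⁾` of a simple collection
`{F i}`, the natural restriction ring homomorphism
`End_G(F⁽ⁿ⁺¹⁾) → End_G(F⁽ⁿ⁾)` between the rings of filtration-preserving
endomorphisms is surjective.

The tower is given by objects `T n` (`T n = F⁽ⁿ⁾`) with epimorphisms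
`p n : T (n+1) ⟶ T n` whose kernels are biproducts of copies of the `F j`, and the
universal-extension property is encoded by: the pullback along `p n` of any
extension of `T n` by any `F j` splits.  Filtration-preserving endomorphisms of
`T n` are those descending compatibly to all `T m`, `m ≤ n`; an endomorphism `φ`
of `T n` is the restriction of `φ'` on `T (n+1)` when `φ' ≫ p n = p n ≫ φ`.
-/

open CategoryTheory Limits

attribute [local instance] CategoryTheory.Limits.HasFiniteBiproducts.of_hasFiniteProducts

noncomputable section

universe v u

section Aux

variable {A : Type u} [Category.{v} A] [Abelian A]

/-- `C` is liftable w.r.t. `π : X ⟶ T` if `π` lifts through every extension of `T`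
with kernel `C`. -/
def Liftable {X T : A} (π : X ⟶ T) (C : A) : Prop :=
  ∀ (D : A) (a : C ⟶ D) (b : D ⟶ T) (w : a ≫ b = 0),
    (ShortComplex.mk a b w).ShortExact → ∃ t : X ⟶ D, t ≫ b = π

variable {X T : A} {π : X ⟶ T}

lemma shortExact_congr {X₁ X₂ X₃ : A} {f f' : X₁ ⟶ X₂} {g g' : X₂ ⟶ X₃}
    {w : f ≫ g = 0} {w' : f' ≫ g' = 0} (hf : f = f') (hg : g = g')
    (h : (ShortComplex.mk f g w).ShortExact) : (ShortComplex.mk f' g' w').ShortExact := by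
  subst hf; subst hg; exact h

lemma liftable_of_iso {C C' : A} (e : C ≅ C') (h : Liftable π C') : Liftable π C := by
  intro D a b w hse
  have w' : (e.inv ≫ a) ≫ b = 0 := by rw [Category.assoc, w, comp_zero]
  refine h D (e.inv ≫ a) b w' ?_
  refine ShortComplex.shortExact_of_iso (S₁ := ShortComplex.mk a b w) ?_ hse
  exact ShortComplex.isoMk e (Iso.refl _) (Iso.refl _) (by simp) (by simp)

lemma liftable_of_isZero {C : A} (hC : IsZero C) : Liftable π C := by
  intro D a b w hse
  have hm : Mono a := hse.mono_f
  have : Mono b := by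
    refine Preadditive.mono_of_cancel_zero b ?_
    intro Z g hg
    have hl := hse.exact.lift_f g hg
    rw [show (ShortComplex.mk a b w).f = 0 from hC.eq_of_src _ _, comp_zero] at hl
    exact hl.symm
  have : Epi b := hse.epi_g
  have : IsIso b := isIso_of_mono_of_epi b
  exact ⟨π ≫ inv b, by simp⟩

end Aux

section Pseudo

variable {A : Type u} [Category.{v} A] [Abelian A]

open CategoryTheory.Abelian

attribute [local instance] Pseudoelement.objectToSort Pseudoelement.homToFun

/-- The quotient of an extension of `T` by `C₁ ⊞ C₂` by the second summand is an
extension of `T` by `C₁`. -/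
lemma coker_shortExact {T D C₁ C₂ : A} (i1 : C₁ ⟶ D) (i2 : C₂ ⟶ D) (b : D ⟶ T)
    (w : biprod.desc i1 i2 ≫ b = 0)
    (hse : (ShortComplex.mk (biprod.desc i1 i2) b w).ShortExact)
    (hi2b : i2 ≫ b = 0)
    (w1 : (i1 ≫ cokernel.π i2) ≫ cokernel.desc i2 b hi2b = 0) :
    (ShortComplex.mk (i1 ≫ cokernel.π i2) (cokernel.desc i2 b hi2b) w1).ShortExact := by
  have hMa : Mono (biprod.desc i1 i2) := hse.mono_f
  have hEb : Epi b := hse.epi_g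
  have hMi2 : Mono i2 := by
    have h : biprod.inr ≫ biprod.desc i1 i2 = i2 := biprod.inr_desc _ _
    exact h ▸ (mono_comp _ _)
  have hmono : Mono (i1 ≫ cokernel.π i2) := by
    refine Preadditive.mono_of_cancel_zero _ ?_
    intro Z h hh
    have h2 : (h ≫ i1) ≫ cokernel.π i2 = 0 := by rw [Category.assoc, hh]
    have hu : Abelian.monoLift i2 (h ≫ i1) h2 ≫ i2 = h ≫ i1 :=
      Abelian.monoLift_comp i2 (h ≫ i1) h2
    have h3 : Abelian.monoLift i2 (h ≫ i1) h2 ≫ biprod.inr = h ≫ biprod.inl := by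
      rw [← cancel_mono (biprod.desc i1 i2)]
      simpa [Category.assoc] using hu
    have h4 := congrArg (fun t => t ≫ biprod.fst) h3
    simpa using h4.symm
  have hepi : Epi (cokernel.desc i2 b hi2b) :=
    epi_of_epi_fac (cokernel.π_desc i2 b hi2b)
  have key : biprod.desc i1 i2 ≫ cokernel.π i2 =
      biprod.fst ≫ (i1 ≫ cokernel.π i2) := by
    ext
    · simp
    · simp [cokernel.condition]
  have hexact : (ShortComplex.mk (i1 ≫ cokernel.π i2) (cokernel.desc i2 b hi2b) w1).Exact := by
    apply Pseudoelement.exact_of_pseudo_exact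
    intro x hx
    obtain ⟨d, hd⟩ := Pseudoelement.pseudo_surjective_of_epi (cokernel.π i2) x
    have hbd : b d = 0 := by
      rw [← cokernel.π_desc i2 b hi2b, Pseudoelement.comp_apply, hd]
      exact hx
    obtain ⟨c, hc⟩ := Pseudoelement.pseudo_exact_of_exact hse.exact d hbd
    have hc' : Pseudoelement.pseudoApply (biprod.desc i1 i2) c = d := hc
    refine ⟨Pseudoelement.pseudoApply (biprod.fst (X := C₁) (Y := C₂)) c, ?_⟩
    show Pseudoelement.pseudoApply (i1 ≫ cokernel.π i2)
      (Pseudoelement.pseudoApply (biprod.fst (X := C₁) (Y := C₂)) c) = x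
    rw [← Pseudoelement.comp_apply, ← key, Pseudoelement.comp_apply, hc', hd]
  exact { exact := hexact, mono_f := hmono, epi_g := hepi }


/-- Transport a short exact sequence along the braiding of the biproduct. -/
lemma shortExact_braid {T D C₁ C₂ : A} (i1 : C₁ ⟶ D) (i2 : C₂ ⟶ D) {b : D ⟶ T}
    {w : biprod.desc i1 i2 ≫ b = 0} {w' : biprod.desc i2 i1 ≫ b = 0}
    (h : (ShortComplex.mk (biprod.desc i1 i2) b w).ShortExact) :
    (ShortComplex.mk (biprod.desc i2 i1) b w').ShortExact := by
  refine ShortComplex.shortExact_of_iso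
    (S₁ := ShortComplex.mk (biprod.desc i1 i2) b w) ?_ h
  refine ShortComplex.isoMk (biprod.braiding C₁ C₂) (Iso.refl _) (Iso.refl _) ?_ (by simp)
  ext <;> simp

lemma liftable_biprod {X T : A} {π : X ⟶ T} {C₁ C₂ : A}
    (h1 : Liftable π C₁) (h2 : Liftable π C₂) : Liftable π (C₁ ⊞ C₂) := by
  intro D a b w hse
  have hMa : Mono a := hse.mono_f
  have hEb : Epi b := hse.epi_g
  set i1 : C₁ ⟶ D := biprod.inl ≫ a with hi1
  set i2 : C₂ ⟶ D := biprod.inr ≫ a with hi2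
  have ha : a = biprod.desc i1 i2 := by ext <;> simp [hi1, hi2]
  have wd : biprod.desc i1 i2 ≫ b = 0 := ha ▸ w
  have hsed : (ShortComplex.mk (biprod.desc i1 i2) b wd).ShortExact :=
    shortExact_congr ha rfl hse
  have hi1b : i1 ≫ b = 0 := by
    have h0 : (biprod.inl ≫ biprod.desc i1 i2) ≫ b = 0 := by
      rw [Category.assoc, wd, comp_zero]
    rwa [biprod.inl_desc] at h0
  have hi2b : i2 ≫ b = 0 := by
    have h0 : (biprod.inr ≫ biprod.desc i1 i2) ≫ b = 0 := by
      rw [Category.assoc, wd, comp_zero]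
    rwa [biprod.inr_desc] at h0
  have wd' : biprod.desc i2 i1 ≫ b = 0 := by
    ext
    · rw [reassoc_of% (biprod.inl_desc i2 i1), hi2b, comp_zero]
    · rw [reassoc_of% (biprod.inr_desc i2 i1), hi1b, comp_zero]
  have hsed' : (ShortComplex.mk (biprod.desc i2 i1) b wd').ShortExact :=
    shortExact_braid i1 i2 hsed
  -- the two intermediate quotients
  set π1 : D ⟶ cokernel i2 := cokernel.π i2 with hπ1
  set π2 : D ⟶ cokernel i1 := cokernel.π i1 with hπ2
  set b1 : cokernel i2 ⟶ T := cokernel.desc i2 b hi2b with hb1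
  set b2 : cokernel i1 ⟶ T := cokernel.desc i1 b hi1b with hb2
  set j1 : C₁ ⟶ cokernel i2 := i1 ≫ π1 with hj1
  set j2 : C₂ ⟶ cokernel i1 := i2 ≫ π2 with hj2
  have w1 : j1 ≫ b1 = 0 := by
    rw [hj1, Category.assoc, hπ1, hb1, cokernel.π_desc, hi1b]
  have w2 : j2 ≫ b2 = 0 := by
    rw [hj2, Category.assoc, hπ2, hb2, cokernel.π_desc, hi2b]
  have hse1 : (ShortComplex.mk j1 b1 w1).ShortExact :=
    coker_shortExact i1 i2 b wd hsed hi2b w1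
  have hse2 : (ShortComplex.mk j2 b2 w2).ShortExact :=
    coker_shortExact i2 i1 b wd' hsed' hi1b w2
  have hMono1 : Mono j1 := hse1.mono_f
  have hMono2 : Mono j2 := hse2.mono_f
  have hEpi1 : Epi b1 := hse1.epi_g
  have hEpi2 : Epi b2 := hse2.epi_g
  -- the comparison map to the fibre product
  have hcomm : π1 ≫ b1 = π2 ≫ b2 := by
    rw [hπ1, hb1, cokernel.π_desc, hπ2, hb2, cokernel.π_desc]
  set m : D ⟶ pullback b1 b2 := pullback.lift π1 π2 hcomm with hm
  -- the kernel of the fibre product over T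
  have hκ1w : j1 ≫ b1 = (0 : C₁ ⟶ cokernel i1) ≫ b2 := by rw [w1, zero_comp]
  have hκ2w : (0 : C₂ ⟶ cokernel i2) ≫ b1 = j2 ≫ b2 := by rw [w2, zero_comp]
  set κ1 : C₁ ⟶ pullback b1 b2 := pullback.lift j1 0 hκ1w with hκ1
  set κ2 : C₂ ⟶ pullback b1 b2 := pullback.lift 0 j2 hκ2w with hκ2
  set κ : C₁ ⊞ C₂ ⟶ pullback b1 b2 := biprod.desc κ1 κ2 with hκ
  set πP : pullback b1 b2 ⟶ T := pullback.fst b1 b2 ≫ b1 with hπP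
  have hκf : κ ≫ pullback.fst b1 b2 = biprod.desc j1 0 := by
    rw [hκ]; ext
    · rw [reassoc_of% (biprod.inl_desc κ1 κ2), hκ1, pullback.lift_fst, biprod.inl_desc]
    · rw [reassoc_of% (biprod.inr_desc κ1 κ2), hκ2, pullback.lift_fst, biprod.inr_desc]
  have hκs : κ ≫ pullback.snd b1 b2 = biprod.desc 0 j2 := by
    rw [hκ]; ext
    · rw [reassoc_of% (biprod.inl_desc κ1 κ2), hκ1, pullback.lift_snd, biprod.inl_desc]
    · rw [reassoc_of% (biprod.inr_desc κ1 κ2), hκ2, pullback.lift_snd, biprod.inr_desc]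
  have wP : κ ≫ πP = 0 := by
    rw [hπP, ← Category.assoc, hκf]
    ext
    · rw [reassoc_of% (biprod.inl_desc j1 (0 : C₂ ⟶ cokernel i2)), w1]; simp
    · rw [reassoc_of% (biprod.inr_desc j1 (0 : C₂ ⟶ cokernel i2))]; simp
  have hMκ : Mono κ := by
    refine Preadditive.mono_of_cancel_zero _ ?_
    intro Z h hh
    have e1 : h ≫ biprod.fst = 0 := by
      apply (cancel_mono j1).1
      have h0 : h ≫ κ ≫ pullback.fst b1 b2 = 0 := by
        rw [← Category.assoc, hh, zero_comp]
      rw [hκf, biprod.desc_eq, Preadditive.comp_add, comp_zero, comp_zero, add_zero,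
        ← Category.assoc] at h0
      rw [zero_comp]; exact h0
    have e2 : h ≫ biprod.snd = 0 := by
      apply (cancel_mono j2).1
      have h0 : h ≫ κ ≫ pullback.snd b1 b2 = 0 := by
        rw [← Category.assoc, hh, zero_comp]
      rw [hκs, biprod.desc_eq, Preadditive.comp_add, comp_zero, comp_zero, zero_add,
        ← Category.assoc] at h0
      rw [zero_comp]; exact h0
    have hdec : h = (h ≫ biprod.fst) ≫ biprod.inl + (h ≫ biprod.snd) ≫ biprod.inr := by
      rw [Category.assoc, Category.assoc, ← Preadditive.comp_add, biprod.total,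
        Category.comp_id]
    rw [hdec, e1, e2]; simp
  have hEπP : Epi πP := by
    have : Epi (pullback.fst b1 b2) := Abelian.epi_pullback_of_epi_g b1 b2
    rw [hπP]; exact epi_comp _ _
  have hlim : IsLimit (KernelFork.ofι κ wP) := by
    refine KernelFork.IsLimit.ofι' κ wP ?_
    intro Z g hg
    have hg1 : (g ≫ pullback.fst b1 b2) ≫ b1 = 0 := by
      rw [Category.assoc, ← hπP, hg]
    have hg2 : (g ≫ pullback.snd b1 b2) ≫ b2 = 0 := by
      rw [Category.assoc, ← pullback.condition, ← Category.assoc]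
      exact hg1
    have hl1 := hse1.exact.lift_f (g ≫ pullback.fst b1 b2) hg1
    have hl2 := hse2.exact.lift_f (g ≫ pullback.snd b1 b2) hg2
    refine ⟨biprod.lift (hse1.exact.lift _ hg1) (hse2.exact.lift _ hg2), ?_⟩
    apply pullback.hom_ext
    · rw [Category.assoc, hκf, biprod.lift_desc, comp_zero, add_zero]
      exact hl1
    · rw [Category.assoc, hκs, biprod.lift_desc, comp_zero, zero_add]
      exact hl2
  have hseP : (ShortComplex.mk κ πP wP).ShortExact :=
    { exact := ShortComplex.exact_of_f_is_kernel _ hlim, mono_f := hMκ, epi_g := hEπP }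
  -- five lemma
  have hcomm12 : 𝟙 (C₁ ⊞ C₂) ≫ κ = biprod.desc i1 i2 ≫ m := by
    rw [Category.id_comp]
    apply pullback.hom_ext
    · rw [hκf, Category.assoc, hm, pullback.lift_fst]
      ext
      · rw [biprod.inl_desc, reassoc_of% (biprod.inl_desc i1 i2), hj1]
      · rw [biprod.inr_desc, reassoc_of% (biprod.inr_desc i1 i2), hπ1, cokernel.condition]
    · rw [hκs, Category.assoc, hm, pullback.lift_snd]
      ext
      · rw [biprod.inl_desc, reassoc_of% (biprod.inl_desc i1 i2), hπ2, cokernel.condition]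
      · rw [biprod.inr_desc, reassoc_of% (biprod.inr_desc i1 i2), hj2]
  have hcomm23 : m ≫ πP = b ≫ 𝟙 T := by
    rw [Category.comp_id, hπP, hm, reassoc_of% (pullback.lift_fst π1 π2 hcomm),
      hπ1, hb1, cokernel.π_desc]
  let Φ : ShortComplex.mk (biprod.desc i1 i2) b wd ⟶ ShortComplex.mk κ πP wP :=
    { τ₁ := 𝟙 _, τ₂ := m, τ₃ := 𝟙 _,
      comm₁₂ := hcomm12, comm₂₃ := hcomm23 }
  have hIm : IsIso m := by
    have h1' : IsIso Φ.τ₁ := by dsimp [Φ]; infer_instance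
    have h3' : IsIso Φ.τ₃ := by dsimp [Φ]; infer_instance
    exact ShortComplex.isIso₂_of_shortExact_of_isIso₁₃ Φ hsed hseP
  -- combine the two lifts
  obtain ⟨t1, ht1⟩ := h1 _ j1 b1 w1 hse1
  obtain ⟨t2, ht2⟩ := h2 _ j2 b2 w2 hse2
  have htt : t1 ≫ b1 = t2 ≫ b2 := by rw [ht1, ht2]
  refine ⟨pullback.lift t1 t2 htt ≫ inv m, ?_⟩
  have hb' : b = m ≫ πP := by rw [hcomm23, Category.comp_id]
  rw [hb', ← Category.assoc, Category.assoc _ (inv m) m, IsIso.inv_hom_id, Category.comp_id,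
    hπP, ← Category.assoc, pullback.lift_fst, ht1]

end Pseudo

section Aux2

variable {A : Type u} [Category.{v} A] [Abelian A] {X T : A} {π : X ⟶ T}

/-- Splitting off the first summand of a biproduct over `Fin (n+1)`. -/
def biproductFinSuccIso {n : ℕ} (G : Fin (n + 1) → A) :
    (⨁ G) ≅ G 0 ⊞ (⨁ fun i : Fin n => G i.succ) where
  hom := biprod.lift (biproduct.π G 0) (biproduct.lift fun i => biproduct.π G i.succ)
  inv := biprod.desc (biproduct.ι G 0) (biproduct.desc fun i => biproduct.ι G i.succ)
  hom_inv_id := by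
    rw [biprod.lift_desc, biproduct.lift_desc, ← biproduct.total, Fin.sum_univ_succ]
  inv_hom_id := by
    ext j
    · simp
    · simpa using biproduct.ι_π_ne G (Ne.symm (Fin.succ_ne_zero j))
    · simp [biproduct.ι_π_ne, Fin.succ_ne_zero]
    · simp [biproduct.ι_π, Fin.succ_inj]

lemma liftable_biproduct {n : ℕ} (G : Fin n → A) (h : ∀ i, Liftable π (G i)) :
    Liftable π (⨁ G) := by
  induction n with
  | zero =>
    refine liftable_of_isZero ?_
    rw [IsZero.iff_id_eq_zero]
    apply biproduct.hom_ext
    intro j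
    exact j.elim0
  | succ n ih =>
    exact liftable_of_iso (biproductFinSuccIso G)
      (liftable_biprod (h 0) (ih _ (fun i => h i.succ)))

end Aux2

variable {k : Type} [Field k] {A : Type u} [Category.{v} A] [Abelian A]
  [CategoryTheory.Linear k A] {r : ℕ}

/-- `φ : T n ⟶ T n` preserves the filtration `G^p = Ker (T n ⟶ T (p-1))`,
equivalently it descends to endomorphisms of every quotient `T m`, `m ≤ n`. -/
def FiltEndo (T : ℕ → A) (p : ∀ n, T (n + 1) ⟶ T n) (n : ℕ) (φ : T n ⟶ T n) : Prop :=
  ∃ ψ : ∀ m, T m ⟶ T m, ψ n = φ ∧ ∀ m, m < n → p m ≫ ψ m = ψ (m + 1) ≫ p m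

theorem stmt7 (F : Fin r → A)
    (hsimple : ∀ i j, Module.finrank k (F i ⟶ F j) = if i = j then 1 else 0)
    (T : ℕ → A) (p : ∀ n, T (n + 1) ⟶ T n)
    (K : ℕ → A) (f : ∀ n, K n ⟶ T (n + 1)) (w : ∀ n, f n ≫ p n = 0)
    (hses : ∀ n, (ShortComplex.mk (f n) (p n) (w n)).ShortExact)
    (hKbiprod : ∀ n, ∃ d : Fin r → ℕ,
      Nonempty (K n ≅ ⨁ fun j : Fin r => ⨁ fun _ : Fin (d j) => F j))
    (huniv : ∀ (n : ℕ) (j : Fin r) (D : A) (a : F j ⟶ D) (b : D ⟶ T n)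
      (w' : a ≫ b = 0), (ShortComplex.mk a b w').ShortExact →
      ∃ t : T (n + 1) ⟶ D, t ≫ b = p n) :
    ∀ (n : ℕ) (φ : T n ⟶ T n), FiltEndo T p n φ →
      ∃ φ' : T (n + 1) ⟶ T (n + 1), FiltEndo T p (n + 1) φ' ∧
        φ' ≫ p n = p n ≫ φ := by
  intro n φ hφ
  obtain ⟨ψ, hψn, hψc⟩ := hφ
  obtain ⟨d, ⟨eK⟩⟩ := hKbiprod n
  -- the kernel `K n` is liftable with respect to `p n`
  have hLift : Liftable (p n) (K n) := by
    refine liftable_of_iso eK (liftable_biproduct _ (fun j => ?_))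
    refine liftable_biproduct _ (fun _ => ?_)
    exact fun D a b w' hse => huniv n j D a b w' hse
  -- pull back the extension `T (n+1) → T n` along `φ`
  set P := pullback (p n) φ with hP
  have hκw : f n ≫ p n = (0 : K n ⟶ T n) ≫ φ := by rw [w n, zero_comp]
  set κ : K n ⟶ P := pullback.lift (f n) 0 hκw with hκdef
  have wκ : κ ≫ pullback.snd (p n) φ = 0 := by rw [hκdef, pullback.lift_snd]
  have hMκ : Mono κ := by
    have h1 : Mono (f n) := (hses n).mono_f
    have h2 : κ ≫ pullback.fst (p n) φ = f n := by rw [hκdef, pullback.lift_fst]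
    exact mono_of_mono_fac h2
  have hEsnd : Epi (pullback.snd (p n) φ) := by
    have : Epi (p n) := (hses n).epi_g
    exact Abelian.epi_pullback_of_epi_f _ _
  have hlim : IsLimit (KernelFork.ofι κ wκ) := by
    refine KernelFork.IsLimit.ofι' κ wκ ?_
    intro Z g hg
    have hg1 : (g ≫ pullback.fst (p n) φ) ≫ p n = 0 := by
      rw [Category.assoc, pullback.condition, ← Category.assoc, hg, zero_comp]
    have hMf : Mono (f n) := (hses n).mono_f
    have hl := (hses n).exact.lift_f (g ≫ pullback.fst (p n) φ) hg1
    refine ⟨(hses n).exact.lift _ hg1, ?_⟩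
    apply pullback.hom_ext
    · rw [Category.assoc, hκdef, pullback.lift_fst]
      exact hl
    · rw [Category.assoc, hκdef, pullback.lift_snd, comp_zero, hg]
  have hseP : (ShortComplex.mk κ (pullback.snd (p n) φ) wκ).ShortExact :=
    { exact := ShortComplex.exact_of_f_is_kernel _ hlim, mono_f := hMκ, epi_g := hEsnd }
  obtain ⟨t, ht⟩ := hLift P κ (pullback.snd (p n) φ) wκ hseP
  refine ⟨t ≫ pullback.fst (p n) φ, ?_, ?_⟩
  · -- filtration-preserving
    refine ⟨fun m => if h : m = n + 1 then
      eqToHom (congrArg T h) ≫ (t ≫ pullback.fst (p n) φ) ≫ eqToHom (congrArg T h.symm)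
      else ψ m, ?_, ?_⟩
    · simp
    · intro m hm
      dsimp only
      by_cases h : m = n
      · subst h
        rw [dif_neg (by omega), dif_pos rfl]
        simp only [eqToHom_refl, Category.comp_id, Category.id_comp]
        rw [hψn, Category.assoc, pullback.condition, ← Category.assoc, ht]
      · rw [dif_neg (by omega), dif_neg (by omega)]
        exact hψc m (by omega)
  · rw [Category.assoc, pullback.condition, ← Category.assoc, ht]


end
end

section
/- Let R be a finite-dimensional k-algebra in (Art_r) whose socle, as a right R-module, contains for each i a unique (up to scalar) element s_i with M_i s_i = 0, and suppose these exhaust the socle (as holds for the endomorphism ring of a relative spherical object, where dim Hom(F_R,F_i) = dim Hom(F_i,F_R) = 1). Then the k-linear dual R^* = Hom_k(R, k) is free of rank 1 as a right R-module, generated by any φ ∈ R^* with φ(s_i) = 1 for all i. -/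
/-!
STATEMENT 14: Let `R ∈ (Art_r)` be a finite-dimensional `k`-algebra whose socle,
as a right `R`-module, contains for each `i` a unique (up to scalar) nonzero
element `s i` with `M_i · s i = 0`, and suppose these exhaust the socle (every
nonzero two-sided ideal contains some `s i`).  Then the `k`-linear dual
`R^* = Hom_k(R, k)`, with right `R`-action `(φ·s)(x) = φ(sx)`, is free of rank `1`
as a right `R`-module, generated by any `φ` with `φ(s i) = 1` for all `i`; i.e.
the map `R → R^*`, `s ↦ φ·s`, is bijective.
-/

noncomputable section

theorem stmt14 {k : Type} [Field k] {r : ℕ} (hr : 0 < r)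
    {R : Type} [Ring R] [Algebra k R] [FiniteDimensional k R]
    (ι : (Fin r → k) →ₐ[k] R) (π : R →ₐ[k] (Fin r → k))
    (hsect : π.comp ι = AlgHom.id k (Fin r → k))
    (hnil : IsNilpotent (LinearMap.ker π.toLinearMap : Submodule k R))
    (s : Fin r → R) (hs0 : ∀ i, s i ≠ 0)
    -- `M_i · s i = 0` :
    (hann : ∀ (i : Fin r) (x : R), π x i = 0 → x * s i = 0)
    -- uniqueness of `s i` up to scalar :
    (huniq : ∀ (i : Fin r) (y : R), (∀ x : R, π x i = 0 → x * y = 0) →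
      ∃ c : k, y = c • s i)
    -- every nonzero two-sided ideal of `R` contains some `s i` :
    (hsocle : ∀ I : Ideal R, (∀ x ∈ I, ∀ t : R, x * t ∈ I) → I ≠ ⊥ →
      ∃ i, s i ∈ I)
    (φ : R →ₗ[k] k) (hφ : ∀ i, φ (s i) = 1) :
    Function.Bijective (fun t : R => φ ∘ₗ LinearMap.mulLeft k t) := by
  classical
  set N : Submodule k R := LinearMap.ker π.toLinearMap with hN
  -- idempotents
  set e : Fin r → R := fun i => ι (Pi.single i 1) with he
  have hπι : ∀ v, π (ι v) = v := fun v => by simpa using congrArg (fun ψ => ψ v) (congrArg DFunLike.coe hsect)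
  have he_sum : (∑ i, e i) = 1 := by
    rw [← map_sum ι, ← map_one ι]
    congr 1
    ext j
    simp [Finset.sum_apply, Pi.single_apply]
  -- key: no nonzero y with φ (t * y) = 0 for all t
  have key : ∀ (m : ℕ) (y : R), y ≠ 0 → (∀ t : R, φ (t * y) = 0) →
      (∀ z ∈ (N ^ m : Submodule k R), z * y = 0) → False := by
    intro m
    induction m with
    | zero =>
      intro y hy hRk hz
      have h1 : (1 : R) ∈ (N ^ 0 : Submodule k R) := by
        rw [pow_zero]; exact Submodule.one_le.mp le_rfl
      exact hy (by simpa using hz 1 h1)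
    | succ m ih =>
      intro y hy hRk hz
      by_cases hx : ∃ x ∈ N, x * y ≠ 0
      · obtain ⟨x, hxN, hxy⟩ := hx
        refine ih (x * y) hxy (fun t => by rw [← mul_assoc]; exact hRk _) ?_
        intro z hzm
        rw [← mul_assoc]
        exact hz _ (by rw [pow_succ]; exact Submodule.mul_mem_mul hzm hxN)
      · push_neg at hx
        -- for each i, e i * y is annihilated by M_i
        have hei : ∀ i, ∃ c : k, e i * y = c • s i := by
          intro i
          refine huniq i (e i * y) fun x hxi => ?_
          rw [← mul_assoc]
          apply hx
          show x * e i ∈ N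
          have : π (x * e i) = 0 := by
            rw [map_mul, he, hπι]
            ext j
            by_cases hj : j = i
            · subst hj; simp [hxi]
            · simp [Pi.single_apply, hj]
          simpa [hN, LinearMap.mem_ker] using this
        choose c hc using hei
        have hy' : y = ∑ i, c i • s i := by
          calc y = (∑ i, e i) * y := by rw [he_sum, one_mul]
          _ = ∑ i, e i * y := by rw [Finset.sum_mul]
          _ = ∑ i, c i • s i := by simp_rw [hc]
        have : ∃ i, c i ≠ 0 := by
          by_contra h
          push_neg at h
          exact hy (by simp [hy', h])
        obtain ⟨i, hci⟩ := this
        have := hRk (e i)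
        rw [hc i, map_smul, hφ i, smul_eq_mul, mul_one] at this
        exact hci this
  -- right-multiplication map g is injective
  set g : R →ₗ[k] Module.Dual k R :=
    { toFun := fun y => φ ∘ₗ LinearMap.mulRight k y
      map_add' := fun a b => by ext x; simp [mul_add]
      map_smul' := fun a b => by ext x; simp } with hg
  have hginj : Function.Injective g := by
    rw [← LinearMap.ker_eq_bot]
    rw [Submodule.eq_bot_iff]
    intro y hy
    by_contra hy0
    obtain ⟨m, hm⟩ := hnil
    refine key m y hy0 (fun t => ?_) (fun z hzm => ?_)
    · exact congrArg (fun ψ => ψ t) hy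
    · rw [hm] at hzm
      rw [(Submodule.mem_bot k).mp hzm, zero_mul]
  have hgsurj : Function.Surjective g :=
    (LinearMap.injective_iff_surjective_of_finrank_eq_finrank
      (Subspace.dual_finrank_eq).symm).mp hginj
  -- now the left-multiplication map
  set f : R →ₗ[k] Module.Dual k R :=
    { toFun := fun t => φ ∘ₗ LinearMap.mulLeft k t
      map_add' := fun a b => by ext x; simp [add_mul]
      map_smul' := fun a b => by ext x; simp } with hf
  have hfinj : Function.Injective f := by
    rw [← LinearMap.ker_eq_bot, Submodule.eq_bot_iff]
    intro t ht
    rw [← Module.forall_dual_apply_eq_zero_iff k t]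
    intro ψ
    obtain ⟨y, rfl⟩ := hgsurj ψ
    have := congrArg (fun χ : Module.Dual k R => χ y) ht
    simpa [hf, hg] using this
  have hfbij : Function.Bijective f :=
    ⟨hfinj, (LinearMap.injective_iff_surjective_of_finrank_eq_finrank
      (Subspace.dual_finrank_eq).symm).mp hfinj⟩
  exact hfbij

end
end

section
/- Let {F_i}_{i=1}^r be a simple collection and F_R an r-pointed NC deformation of it over R ∈ (Art_r) obtained as an iterated extension, with dim Hom(F_i, F_R) = 1 for all i. Then there is a permutation σ of {1,…,r} such that Hom(F_i, F_R) ≅ R/M_{σ(i)} as left R-modules for all i; equivalently dim Hom(F_i, F_{R,k}) = δ_{σ(i)k}. -/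
/-!
STATEMENT 17: Let `{F i}` be a simple collection and `F_R = ⊕_l FR l` an
`r`-pointed NC deformation of it over `R ∈ (Art_r)` obtained as an iterated
extension, with `dim Hom(F i, F_R) = 1` for all `i`.  Then there is a permutation
`σ` of `{1, …, r}` such that `Hom(F i, F_R) ≅ R/M_{σ(i)}` as left `R`-modules;
equivalently `dim Hom(F i, FR l) = δ_{σ(i) l}`, and `M_{σ(i)}` annihilates
`Hom(F i, F_R)`.

The left `R`-module structure on `F_R` is a `k`-linear map `ρ : R → End(F_R)`
with `ρ(1) = id` and `ρ(a b) = ρ(b) ≫ ρ(a)`, the idempotents of `R` acting by the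
biproduct projectors; `Hom(F i, F_R)` is a left `R`-module via `φ ↦ φ ≫ ρ(a)`.
The hypothesis that `F_R` is an iterated extension of the `F i` enters via: for
each `l` there exists `i` with `Hom(F i, FR l) ≠ 0`.
-/

open CategoryTheory Limits

attribute [local instance] CategoryTheory.Limits.HasFiniteBiproducts.of_hasFiniteProducts

noncomputable section

universe v u

theorem stmt17 {k : Type} [Field k] {r : ℕ} {A : Type u} [Category.{v} A]
    [Abelian A] [CategoryTheory.Linear k A]
    (F : Fin r → A)
    (hsimple : ∀ i j, Module.finrank k (F i ⟶ F j) = if i = j then 1 else 0)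
    {R : Type} [Ring R] [Algebra k R] [FiniteDimensional k R]
    (ι : (Fin r → k) →ₐ[k] R) (π : R →ₐ[k] (Fin r → k))
    (hsect : π.comp ι = AlgHom.id k (Fin r → k))
    (hnil : IsNilpotent (LinearMap.ker π.toLinearMap : Submodule k R))
    (FR : Fin r → A)
    (ρ : R →ₗ[k] ((⨁ FR) ⟶ (⨁ FR)))
    (hρ1 : ρ 1 = 𝟙 (⨁ FR))
    (hρmul : ∀ a b : R, ρ (a * b) = ρ b ≫ ρ a)
    (hidem : ∀ l : Fin r,
      ρ (ι (Pi.single l 1)) = biproduct.π FR l ≫ biproduct.ι FR l)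
    (hHom1 : ∀ i, Module.finrank k (F i ⟶ (⨁ FR)) = 1)
    (hnonzero : ∀ l, ∃ i, ∃ φ : F i ⟶ FR l, φ ≠ 0) :
    ∃ σ : Equiv.Perm (Fin r),
      (∀ i l, Module.finrank k (F i ⟶ FR l) = if l = σ i then 1 else 0) ∧
      (∀ (i : Fin r) (t : R), π t (σ i) = 0 →
        ∀ φ : F i ⟶ (⨁ FR), φ ≫ ρ t = 0) := by
  classical
  -- The linear equivalence Hom(F i, ⨁ FR) ≃ Π l, Hom(F i, FR l)
  have E : ∀ i : Fin r, (F i ⟶ ⨁ FR) ≃ₗ[k] ∀ l, (F i ⟶ FR l) := fun i =>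
    { toFun := fun φ l => φ ≫ biproduct.π FR l
      map_add' := fun φ ψ => by funext l; simp [Preadditive.add_comp]
      map_smul' := fun c φ => by funext l; simp [Linear.smul_comp]
      invFun := fun f => biproduct.lift f
      left_inv := fun φ => by apply biproduct.hom_ext; intro j; simp
      right_inv := fun f => by funext l; simp }
  have hfinF : ∀ i l, FiniteDimensional k (F i ⟶ FR l) := by
    intro i l
    haveI : FiniteDimensional k (F i ⟶ ⨁ FR) :=
      FiniteDimensional.of_finrank_eq_succ (hHom1 i)
    haveI : FiniteDimensional k (∀ l, (F i ⟶ FR l)) := Module.Finite.equiv (E i)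
    exact Module.Finite.of_surjective
      (LinearMap.proj l : (∀ l, (F i ⟶ FR l)) →ₗ[k] (F i ⟶ FR l))
      (Function.surjective_eval l)
  have hsum : ∀ i, ∑ l, Module.finrank k (F i ⟶ FR l) = 1 := by
    intro i
    haveI := hfinF i
    rw [← Module.finrank_pi_fintype, ← (E i).finrank_eq, hHom1 i]
  have hle1 : ∀ i l, Module.finrank k (F i ⟶ FR l) ≤ 1 := by
    intro i l
    calc Module.finrank k (F i ⟶ FR l)
        ≤ ∑ l, Module.finrank k (F i ⟶ FR l) :=
          Finset.single_le_sum (f := fun l => Module.finrank k (F i ⟶ FR l))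
            (fun _ _ => Nat.zero_le _) (Finset.mem_univ l)
      _ = 1 := hsum i
  have hexists : ∀ i, ∃ l, Module.finrank k (F i ⟶ FR l) = 1 := by
    intro i
    by_contra h
    push_neg at h
    have hz : ∀ l ∈ Finset.univ, Module.finrank k (F i ⟶ FR l) = 0 := by
      intro l _
      have := hle1 i l
      have := h l
      omega
    have := hsum i
    rw [Finset.sum_eq_zero hz] at this
    omega
  have huniq : ∀ i l l', Module.finrank k (F i ⟶ FR l) ≠ 0 →
      Module.finrank k (F i ⟶ FR l') ≠ 0 → l = l' := by
    intro i l l' h h'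
    by_contra hne
    have hs := hsum i
    have hle : Module.finrank k (F i ⟶ FR l) + Module.finrank k (F i ⟶ FR l') ≤ 1 := by
      rw [← hs, ← Finset.sum_pair (f := fun l => Module.finrank k (F i ⟶ FR l)) hne]
      exact Finset.sum_le_sum_of_subset (Finset.subset_univ _)
    omega
  -- the map σ0
  set σ0 : Fin r → Fin r := fun i => (hexists i).choose with hσ0def
  have h1 : ∀ i, Module.finrank k (F i ⟶ FR (σ0 i)) = 1 := fun i =>
    (hexists i).choose_spec
  have hzero : ∀ i l, l ≠ σ0 i → Module.finrank k (F i ⟶ FR l) = 0 := by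
    intro i l hl
    by_contra h
    exact hl (huniq i l (σ0 i) h (by rw [h1 i]; omega))
  have hpos : ∀ i l (φ : F i ⟶ FR l), φ ≠ 0 → Module.finrank k (F i ⟶ FR l) ≠ 0 := by
    intro i l φ hφ
    haveI := hfinF i l
    haveI : Nontrivial (F i ⟶ FR l) := nontrivial_of_ne φ 0 hφ
    exact Module.finrank_pos.ne'
  have hsurj : Function.Surjective σ0 := by
    intro l
    obtain ⟨i, φ, hφ⟩ := hnonzero l
    exact ⟨i, (huniq i l (σ0 i) (hpos i l φ hφ) (by rw [h1 i]; omega)).symm⟩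
  refine ⟨Equiv.ofBijective σ0 hsurj.bijective_of_finite, ?_, ?_⟩
  · intro i l
    by_cases hl : l = σ0 i
    · subst hl
      simp only [Equiv.ofBijective_apply, if_pos rfl]
      exact h1 i
    · rw [if_neg (by simpa using hl)]
      exact hzero i l hl
  · intro i t ht φ
    simp only [Equiv.ofBijective_apply] at ht
    -- a nonzero spanning vector of Hom(F i, ⨁ FR)
    haveI : FiniteDimensional k (F i ⟶ ⨁ FR) :=
      FiniteDimensional.of_finrank_eq_succ (hHom1 i)
    haveI : Nontrivial (F i ⟶ ⨁ FR) :=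
      Module.nontrivial_of_finrank_pos (by rw [hHom1 i]; omega)
    obtain ⟨φ₀, hφ₀⟩ := exists_ne (0 : F i ⟶ ⨁ FR)
    have hspan : ∀ ψ : F i ⟶ ⨁ FR, ∃ c : k, c • φ₀ = ψ :=
      (finrank_eq_one_iff_of_nonzero' φ₀ hφ₀).mp (hHom1 i)
    -- Step A: idempotents away from σ0 i annihilate
    have hA : ∀ (ψ : F i ⟶ ⨁ FR) (l : Fin r), l ≠ σ0 i →
        ψ ≫ ρ (ι (Pi.single l 1)) = 0 := by
      intro ψ l hl
      rw [hidem l, ← Category.assoc]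
      haveI := hfinF i l
      haveI : Subsingleton (F i ⟶ FR l) :=
        Module.finrank_zero_iff.mp (hzero i l hl)
      rw [Subsingleton.elim (ψ ≫ biproduct.π FR l) 0, zero_comp]
    -- Step B: the kernel of π annihilates
    have hB : ∀ n : R, n ∈ LinearMap.ker π.toLinearMap →
        ∀ ψ : F i ⟶ ⨁ FR, ψ ≫ ρ n = 0 := by
      intro n hn
      obtain ⟨N, hN⟩ := hnil
      have hN' : (LinearMap.ker π.toLinearMap : Submodule k R) ^ (N + 1) = ⊥ := by
        rw [pow_succ, hN]
        simp
      have hpow : n ^ (N + 1) = 0 := by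
        have hmem : n ^ (N + 1) ∈
            (LinearMap.ker π.toLinearMap : Submodule k R) ^ (N + 1) :=
          Submodule.pow_mem_pow _ hn _
        rw [hN'] at hmem
        simpa using hmem
      obtain ⟨c, hc⟩ := hspan (φ₀ ≫ ρ n)
      have hcm : ∀ m : ℕ, φ₀ ≫ ρ (n ^ (m + 1)) = c ^ (m + 1) • φ₀ := by
        intro m
        induction m with
        | zero => simpa using hc.symm
        | succ m ih =>
          rw [pow_succ, hρmul, ← Category.assoc, ← hc, Linear.smul_comp, ih,
            smul_smul, ← pow_succ']
      have hc0' : c ^ (N + 1) • φ₀ = 0 := by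
        rw [← hcm N, hpow, map_zero, Limits.comp_zero]
      have hc0 : c = 0 := by
        have := (smul_eq_zero.mp hc0').resolve_right hφ₀
        exact pow_eq_zero_iff (Nat.succ_ne_zero N) |>.mp this
      intro ψ
      obtain ⟨d, hd⟩ := hspan ψ
      rw [← hd, Linear.smul_comp, ← hc, hc0, zero_smul, smul_zero]
    -- kernel membership of t - ι (π t)
    have hπι : (π : R → Fin r → k) (ι (π t)) = π t := AlgHom.congr_fun hsect (π t)
    have hker : t - ι (π t) ∈ LinearMap.ker π.toLinearMap := by
      rw [LinearMap.mem_ker]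
      show π (t - ι (π t)) = 0
      rw [map_sub, hπι, sub_self]
    -- decomposition of ι (π t) into idempotents
    have hι : ι (π t) = ∑ l, π t l • ι (Pi.single l 1) := by
      have hpi : (π t : Fin r → k) = ∑ l, π t l • (Pi.single l 1 : Fin r → k) := by
        funext l'
        simp [Finset.sum_apply, Pi.single_apply]
      conv_lhs => rw [hpi]
      rw [map_sum]
      exact Finset.sum_congr rfl fun l _ => map_smul ι _ _
    have ht' : ρ t = ρ (ι (π t)) + ρ (t - ι (π t)) := by
      rw [← map_add]
      congr 1
      abel
    rw [ht', Preadditive.comp_add, hB _ hker φ, add_zero, hι, map_sum,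
      Preadditive.comp_sum]
    apply Finset.sum_eq_zero
    intro l _
    rw [map_smul, Linear.comp_smul]
    by_cases hl : l = σ0 i
    · subst hl
      rw [ht, zero_smul]
    · rw [hA φ l hl, smul_zero]

end
end
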